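/- arXiv:1704.04509 — 8 statements merged into one kernel-verified Lean document; each statement's English description precedes it below -/
import Mathlib

section
/- For any positive integer n, the least common multiple of the numbers C(n,k)·k for k = 1, ..., n equals lcm(1, 2, ..., n). -/
/-!
Every prime power `p ^ j` dividing `C(n, k) * k` is at most `n`: by Kummer, `v_p (C(n, k))`
counts the carries in positions `1, …, log_p n` when adding `k` and `n - k` in base `p`, and
no carry happens at a position `i` with `p ^ i ∣ k`, so `v_p (C(n, k)) + v_p k ≤ log_p n`.
Hence each `C(n, k) * k` divides `lcm(1, …, n)`; conversely `k ∣ C(n, k) * k`.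
-/

open Finset

namespace Nat

theorem factorization_choose_add_factorization_le_log {p n k : ℕ} (hp : p.Prime) (hkn : k ≤ n)
    (hk0 : k ≠ 0) : (choose n k).factorization p + k.factorization p ≤ log p n := by
  have hdisj : Disjoint {i ∈ Ico 1 (log p n + 1) | p ^ i ≤ k % p ^ i + (n - k) % p ^ i}
      {i ∈ Ico 1 (log p n + 1) | p ^ i ∣ k} := by
    simp +contextual [Finset.disjoint_right, dvd_iff_mod_eq_zero, Nat.mod_lt _ (pow_pos hp.pos _)]
  rw [factorization_choose hp hkn (lt_succ_self _), factorization_eq_card_pow_dvd_of_lt hp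
    (pos_of_ne_zero hk0) ((lt_pow_succ_log_self hp.one_lt k).trans_le
      (Nat.pow_le_pow_right hp.pos (succ_le_succ (log_mono_right hkn)))),
    ← card_union_of_disjoint hdisj, filter_union_right]
  exact (card_filter_le _ _).trans_eq (card_Ico _ _)

theorem pow_le_of_pow_dvd_choose_mul {p j n k : ℕ} (hp : p.Prime) (hkn : k ≤ n) (hk0 : k ≠ 0)
    (hdvd : p ^ j ∣ choose n k * k) : p ^ j ≤ n := by
  have hne : choose n k * k ≠ 0 := Nat.mul_ne_zero (choose_pos hkn).ne' hk0
  have hj : j ≤ (choose n k * k).factorization p := (hp.pow_dvd_iff_le_factorization hne).1 hdvd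
  rw [factorization_mul (choose_pos hkn).ne' hk0] at hj
  exact pow_le_of_le_log (by omega)
    (hj.trans (factorization_choose_add_factorization_le_log hp hkn hk0))

theorem dvd_lcm_Icc_of_forall_prime_pow_le {d n : ℕ}
    (h : ∀ p j : ℕ, p.Prime → p ^ j ∣ d → p ^ j ≤ n) : d ∣ (Icc 1 n).lcm id :=
  (dvd_iff_prime_pow_dvd_dvd _ d).2 fun p j hp hdvd =>
    Finset.dvd_lcm (s := Icc 1 n) (f := id)
      (mem_Icc.2 ⟨one_le_pow _ _ hp.pos, h p j hp hdvd⟩)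

end Nat

theorem lcm_choose_mul_eq_lcm_general (n : ℕ) :
    (Finset.Icc 1 n).lcm (fun k => n.choose k * k) = (Finset.Icc 1 n).lcm id := by
  apply Nat.dvd_antisymm
  · refine Finset.lcm_dvd fun k hk => Nat.dvd_lcm_Icc_of_forall_prime_pow_le fun p j hp hdvd => ?_
    obtain ⟨hk1, hkn⟩ := Finset.mem_Icc.1 hk
    exact Nat.pow_le_of_pow_dvd_choose_mul hp hkn (by omega) hdvd
  · exact Finset.lcm_dvd fun k hk =>
      (dvd_mul_left k _).trans (Finset.dvd_lcm (f := fun k => n.choose k * k) hk)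

theorem lcm_choose_mul_eq_lcm (n : ℕ) (hn : 0 < n) :
    (Finset.Icc 1 n).lcm (fun k => n.choose k * k) = (Finset.Icc 1 n).lcm id :=
  lcm_choose_mul_eq_lcm_general n
end

section
/- For any prime p and positive integer n, if ℓ is the largest integer with p^ℓ ≤ n, then the p-adic valuation of C(n, p^ℓ)·p^ℓ equals ℓ. -/
theorem padicValNat_choose_pow_mul_eq (p n ℓ : ℕ) (hp : p.Prime) (hn : 0 < n)
    (hℓ : p ^ ℓ ≤ n) (hℓ' : n < p ^ (ℓ + 1)) :
    padicValNat p (n.choose (p ^ ℓ) * p ^ ℓ) = ℓ := by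
  haveI : Fact p.Prime := ⟨hp⟩
  have hchoose : padicValNat p (n.choose (p ^ ℓ)) = 0 := by
    rw [padicValNat_choose (b := Nat.log p n + 1) hℓ (Nat.lt_succ_self _),
      Finset.card_eq_zero, Finset.filter_eq_empty_iff]
    intro i _
    simp only [not_le]
    rcases le_or_gt i ℓ with h | h
    · have hz : p ^ ℓ % p ^ i = 0 := Nat.mod_eq_zero_of_dvd (pow_dvd_pow p h)
      rw [hz, zero_add]
      exact Nat.mod_lt _ (pow_pos hp.pos i)
    · have hle : p ^ (ℓ + 1) ≤ p ^ i := Nat.pow_le_pow_right hp.pos h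
      have h1 : p ^ ℓ % p ^ i = p ^ ℓ := Nat.mod_eq_of_lt (by
        calc p ^ ℓ < p ^ (ℓ + 1) := Nat.pow_lt_pow_right hp.one_lt (Nat.lt_succ_self _)
        _ ≤ p ^ i := hle)
      have h2 : (n - p ^ ℓ) % p ^ i = n - p ^ ℓ := Nat.mod_eq_of_lt (by omega)
      rw [h1, h2]
      omega
  rw [padicValNat.mul (Nat.choose_pos hℓ).ne' (pow_ne_zero _ hp.pos.ne'),
    hchoose, padicValNat.prime_pow, zero_add]
end

section
/- Let V be a finite set partitioned as V = V₁ ∪ ... ∪ V_k, and let δ₁, ..., δ_r ≥ 0 be real numbers summing to 1. Then there exists a function g : V → {1,...,r} such that for all i ∈ [r] and j ∈ [k], ⌊δ_i·|V_j|⌋ ≤ |g⁻¹(i) ∩ V_j| ≤ ⌈δ_i·|V_j|⌉, and moreover ⌊δ_i·|V|⌋ ≤ |g⁻¹(i)| ≤ ⌈δ_i·|V|⌉. -/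
open Finset
def IsInt (x : ℝ) : Prop := ∃ z : ℤ, x = z

lemma isInt_sum {β : Type*} (s : Finset β) (f : β → ℝ) (h : ∀ b ∈ s, IsInt (f b)) :
    IsInt (∑ b ∈ s, f b) := by
  classical
  induction s using Finset.cons_induction with
  | empty => exact ⟨0, by simp⟩
  | cons a s ha ih =>
      rw [Finset.sum_cons]
      obtain ⟨z1, hz1⟩ := h _ (mem_cons_self _ _)
      obtain ⟨z2, hz2⟩ := ih (fun b hb => h b (mem_cons_of_mem hb))
      exact ⟨z1 + z2, by rw [hz1, hz2]; push_cast; ring⟩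

lemma tel_sum (f : ℕ → ℤ) (a b : ℕ) (h : a ≤ b) :
    ∑ t ∈ Finset.Ico a b, (f t - f (t+1)) = f a - f b := by
  induction b, h using Nat.le_induction with
  | base => simp
  | succ b hb ih => rw [Finset.sum_Ico_succ_top (by omega), ih]; ring

lemma cycle_exists {r k : ℕ} (y : Fin r → Fin k → ℝ)
    (hrow : ∀ i, IsInt (∑ j, y i j)) (hcol : ∀ j, IsInt (∑ i, y i j))
    (hne : ∃ e : Fin r × Fin k, ¬ IsInt (y e.1 e.2)) :
    ∃ c : Fin r × Fin k → ℤ,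
      (∀ e, c e ≠ 0 → ¬ IsInt (y e.1 e.2)) ∧
      (∃ e, c e ≠ 0) ∧
      (∀ i, ∑ j, c (i, j) = 0) ∧
      (∀ j, ∑ i, c (i, j) = 0) := by
  classical
  have hstepc : ∀ i0 j0, ¬ IsInt (y i0 j0) → ∃ j', j' ≠ j0 ∧ ¬ IsInt (y i0 j') := by
    intro i0 j0 hp
    by_contra hcon; push_neg at hcon
    apply hp
    have h1 : IsInt (∑ j ∈ univ.erase j0, y i0 j) :=
      isInt_sum _ _ (fun b hb => hcon b (mem_erase.mp hb).1)
    obtain ⟨z1, hz1⟩ := h1; obtain ⟨z2, hz2⟩ := hrow i0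
    have he : y i0 j0 = (∑ j, y i0 j) - ∑ j ∈ univ.erase j0, y i0 j := by
      rw [← Finset.add_sum_erase _ _ (mem_univ j0)]; ring
    exact ⟨z2 - z1, by rw [he, hz1, hz2]; push_cast; ring⟩
  have hstepr : ∀ i0 j0, ¬ IsInt (y i0 j0) → ∃ i', i' ≠ i0 ∧ ¬ IsInt (y i' j0) := by
    intro i0 j0 hp
    by_contra hcon; push_neg at hcon
    apply hp
    have h1 : IsInt (∑ i ∈ univ.erase i0, y i j0) :=
      isInt_sum _ _ (fun b hb => hcon b (mem_erase.mp hb).1)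
    obtain ⟨z1, hz1⟩ := h1; obtain ⟨z2, hz2⟩ := hcol j0
    have he : y i0 j0 = (∑ i, y i j0) - ∑ i ∈ univ.erase i0, y i j0 := by
      rw [← Finset.add_sum_erase _ _ (mem_univ i0)]; ring
    exact ⟨z2 - z1, by rw [he, hz1, hz2]; push_cast; ring⟩
  have hnxt' : ∀ p : Fin r × Fin k, ∃ w : Fin k × Fin r, ¬ IsInt (y p.1 p.2) →
      (w.1 ≠ p.2 ∧ ¬ IsInt (y p.1 w.1) ∧ w.2 ≠ p.1 ∧ ¬ IsInt (y w.2 w.1)) := by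
    intro p
    by_cases hp : IsInt (y p.1 p.2)
    · exact ⟨(p.2, p.1), fun h => absurd hp h⟩
    · obtain ⟨j', hj1, hj2⟩ := hstepc p.1 p.2 hp
      obtain ⟨i', hi1, hi2⟩ := hstepr p.1 j' hj2
      exact ⟨(j', i'), fun _ => ⟨hj1, hj2, hi1, hi2⟩⟩
  choose nxt hnxt using hnxt'
  obtain ⟨p0, hp0⟩ := hne
  set step : Fin r × Fin k → Fin r × Fin k := fun p => ((nxt p).2, (nxt p).1) with hstep
  set q : ℕ → Fin r × Fin k := fun t => step^[t] p0 with hqdef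
  have hqs : ∀ t, q (t+1) = step (q t) := fun t => Function.iterate_succ_apply' step t p0
  have hq : ∀ t, ¬ IsInt (y (q t).1 (q t).2) := by
    intro t; induction t with
    | zero => exact hp0
    | succ t ih => rw [hqs]; exact (hnxt (q t) ih).2.2.2
  have hJne : ∀ t, (q (t+1)).2 ≠ (q t).2 := by
    intro t; rw [hqs]; exact (hnxt (q t) (hq t)).1
  have hIne : ∀ t, (q (t+1)).1 ≠ (q t).1 := by
    intro t; rw [hqs]; exact (hnxt (q t) (hq t)).2.2.1
  have hB : ∀ t, ¬ IsInt (y (q t).1 ((q (t+1)).2)) := by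
    intro t; rw [hqs]; exact (hnxt (q t) (hq t)).2.1
  have hpig : ∃ u ∈ Finset.range (k+1), ∃ v ∈ Finset.range (k+1),
      u ≠ v ∧ (q u).2 = (q v).2 := by
    apply Finset.exists_ne_map_eq_of_card_lt_of_maps_to (t := (univ : Finset (Fin k)))
    · simp
    · exact fun a _ => mem_univ _
  have hQ : ∃ v, ∃ u, u < v ∧ (q u).2 = (q v).2 := by
    obtain ⟨u, -, v, -, huv, heq⟩ := hpig
    rcases lt_or_gt_of_ne huv with h | h
    · exact ⟨v, u, h, heq⟩
    · exact ⟨u, v, h, heq.symm⟩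
  have jinj : ∀ a b, a < b → b < Nat.find hQ → (q a).2 = (q b).2 → False :=
    fun a b hab hb h => Nat.find_min hQ hb ⟨a, hab, h⟩
  obtain ⟨s, hss', hseq⟩ := Nat.find_spec hQ
  set s' := Nat.find hQ with hs'def
  have hs1 : s + 1 < s' := by
    rcases Nat.lt_or_ge (s+1) s' with h | h
    · exact h
    · exfalso
      have : s' = s + 1 := by omega
      rw [this] at hseq
      exact hJne s hseq.symm
  set c : Fin r × Fin k → ℤ := fun e => ∑ t ∈ Finset.Ico s s',
    ((if e = ((q t).1, (q t).2) then (1:ℤ) else 0)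
      - (if e = ((q t).1, (q (t+1)).2) then (1:ℤ) else 0)) with hcdef
  have hsupp : ∀ e, c e ≠ 0 → ¬ IsInt (y e.1 e.2) := by
    intro e hce hint
    apply hce
    apply Finset.sum_eq_zero
    intro t _
    have h1 : e ≠ ((q t).1, (q t).2) := by rintro rfl; exact hq t hint
    have h2 : e ≠ ((q t).1, (q (t+1)).2) := by rintro rfl; exact hB t hint
    simp [h1, h2]
  have hrows : ∀ i0, ∑ j0, c (i0, j0) = 0 := by
    intro i0
    have his : ∀ (a : Fin r) (b : Fin k),
        ∑ j0, (if (i0, j0) = (a, b) then (1:ℤ) else 0) = if i0 = a then 1 else 0 := by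
      intro a b
      by_cases h : i0 = a
      · subst h
        rw [Finset.sum_eq_single b]
        · simp
        · intro b' _ hb'; simp [Prod.ext_iff, hb']
        · simp
      · rw [if_neg h]; apply Finset.sum_eq_zero; intro j0 _; simp [Prod.ext_iff, h]
    rw [hcdef]
    simp only []
    rw [Finset.sum_comm]
    apply Finset.sum_eq_zero
    intro t _
    rw [Finset.sum_sub_distrib, his, his]; ring
  have hcols : ∀ j0, ∑ i0, c (i0, j0) = 0 := by
    intro j0
    have hjs : ∀ (a : Fin r) (b : Fin k),
        ∑ i0, (if (i0, j0) = (a, b) then (1:ℤ) else 0) = if j0 = b then 1 else 0 := by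
      intro a b
      by_cases h : j0 = b
      · subst h
        rw [Finset.sum_eq_single a]
        · simp
        · intro a' _ ha'; simp [Prod.ext_iff, ha']
        · simp
      · rw [if_neg h]; apply Finset.sum_eq_zero; intro i0 _; simp [Prod.ext_iff, h]
    have : ∑ i0, c (i0, j0) = ∑ t ∈ Finset.Ico s s',
        ((if j0 = (q t).2 then (1:ℤ) else 0) - (if j0 = (q (t+1)).2 then (1:ℤ) else 0)) := by
      rw [hcdef]
      simp only []
      rw [Finset.sum_comm]
      apply Finset.sum_congr rfl
      intro t _
      rw [Finset.sum_sub_distrib, hjs, hjs]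
    rw [this, tel_sum _ _ _ hss'.le, hseq]
    ring
  have hnz : c ((q (s+1)).1, (q (s+1)).2) = 1 := by
    simp only [hcdef]
    rw [Finset.sum_eq_single_of_mem (s+1) (Finset.mem_Ico.mpr ⟨Nat.le_succ s, hs1⟩)]
    · have h2 : ((q (s+1)).1, (q (s+1)).2) ≠ ((q (s+1)).1, (q (s+1+1)).2) := by
        intro h
        exact hJne (s+1) (congrArg Prod.snd h).symm
      simp [h2]
    · intro t ht htne
      obtain ⟨hts, hts'⟩ := Finset.mem_Ico.mp ht
      have h1 : ((q (s+1)).1, (q (s+1)).2) ≠ ((q t).1, (q t).2) := by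
        intro h
        have := congrArg Prod.snd h
        simp only at this
        rcases Nat.lt_or_ge t (s+1) with hlt | hge
        · exact jinj t (s+1) hlt hs1 this.symm
        · exact jinj (s+1) t (by omega) hts' this
      have h2 : ((q (s+1)).1, (q (s+1)).2) ≠ ((q t).1, (q (t+1)).2) := by
        intro h
        have hsnd := congrArg Prod.snd h
        have hfst := congrArg Prod.fst h
        simp only at hsnd hfst
        rcases Nat.lt_or_ge (t+1) s' with hlt | hge
        · rcases Nat.lt_trichotomy (t+1) (s+1) with h3 | h3 | h3
          · exact jinj (t+1) (s+1) h3 hs1 hsnd.symm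
          · have : t = s := by omega
            subst this
            exact hIne t hfst
          · exact jinj (s+1) (t+1) h3 hlt hsnd
        · have : t + 1 = s' := by omega
          rw [this, ← hseq] at hsnd
          exact jinj s (s+1) (Nat.lt_succ_self s) hs1 hsnd.symm
      simp [h1, h2]
  exact ⟨c, hsupp, ⟨((q (s+1)).1, (q (s+1)).2), by rw [hnz]; exact one_ne_zero⟩, hrows, hcols⟩

open scoped Classical in
lemma round_aux (r k : ℕ) : ∀ N : ℕ, ∀ y : Fin r → Fin k → ℝ,
    ((univ : Finset (Fin r × Fin k)).filter (fun e : Fin r × Fin k => ¬ IsInt (y e.1 e.2))).card ≤ N →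
    (∀ i, IsInt (∑ j, y i j)) → (∀ j, IsInt (∑ i, y i j)) →
    ∃ x : Fin r → Fin k → ℤ,
      (∀ i j, ⌊y i j⌋ ≤ x i j ∧ x i j ≤ ⌈y i j⌉) ∧
      (∀ i, (∑ j, (x i j : ℝ)) = ∑ j, y i j) ∧
      (∀ j, (∑ i, (x i j : ℝ)) = ∑ i, y i j) := by
  classical
  intro N
  induction N with
  | zero =>
      intro y hcard hrow hcol
      have hall : ∀ i j, IsInt (y i j) := by
        intro i j
        by_contra h
        have hm : (i,j) ∈ (univ : Finset (Fin r × Fin k)).filter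
            (fun e => ¬ IsInt (y e.1 e.2)) := mem_filter.mpr ⟨mem_univ _, h⟩
        have := Finset.card_pos.mpr ⟨_, hm⟩
        omega
      have hfl : ∀ i j, ((⌊y i j⌋ : ℝ)) = y i j := by
        intro i j; obtain ⟨z, hz⟩ := hall i j; rw [hz]; simp
      refine ⟨fun i j => ⌊y i j⌋, fun i j => ⟨le_refl _, Int.floor_le_ceil _⟩, ?_, ?_⟩
      · intro i; exact Finset.sum_congr rfl (fun j _ => hfl i j)
      · intro j; exact Finset.sum_congr rfl (fun i _ => hfl i j)
  | succ n ih =>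
      intro y hcard hrow hcol
      by_cases hle : ((univ : Finset (Fin r × Fin k)).filter
          (fun e => ¬ IsInt (y e.1 e.2))).card ≤ n
      · exact ih y hle hrow hcol
      · have hne : ∃ e : Fin r × Fin k, ¬ IsInt (y e.1 e.2) := by
          have h0 : 0 < ((univ : Finset (Fin r × Fin k)).filter
              (fun e => ¬ IsInt (y e.1 e.2))).card := by omega
          obtain ⟨e, he⟩ := Finset.card_pos.mp h0
          exact ⟨e, (mem_filter.mp he).2⟩
        obtain ⟨c, hsupp, ⟨e1, he1⟩, hrows, hcols⟩ := cycle_exists y hrow hcol hne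
        set supp : Finset (Fin r × Fin k) := univ.filter (fun e => c e ≠ 0) with hsuppdef
        have hsne : supp.Nonempty := ⟨e1, mem_filter.mpr ⟨mem_univ _, he1⟩⟩
        set marg : Fin r × Fin k → ℝ := fun e =>
          (if 0 < c e then (⌈y e.1 e.2⌉ : ℝ) - y e.1 e.2 else y e.1 e.2 - ⌊y e.1 e.2⌋)
            / |(c e : ℝ)| with hmargdef
        have hfrac : ∀ e ∈ supp, (⌊y e.1 e.2⌋ : ℝ) < y e.1 e.2 ∧ y e.1 e.2 < (⌈y e.1 e.2⌉ : ℝ) := by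
          intro e he
          have hce : c e ≠ 0 := (mem_filter.mp he).2
          have hni := hsupp e hce
          constructor
          · exact lt_of_le_of_ne (Int.floor_le _) (fun h => hni ⟨_, h.symm⟩)
          · exact lt_of_le_of_ne (Int.le_ceil _) (fun h => hni ⟨_, h⟩)
        have hmargpos : ∀ e ∈ supp, 0 < marg e := by
          intro e he
          have hce : c e ≠ 0 := (mem_filter.mp he).2
          have habs : (0:ℝ) < |(c e : ℝ)| := abs_pos.mpr (Int.cast_ne_zero.mpr hce)
          obtain ⟨h1, h2⟩ := hfrac e he
          rw [hmargdef]
          apply div_pos _ habs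
          by_cases hc : 0 < c e
          · rw [if_pos hc]; linarith
          · rw [if_neg hc]; linarith
        set ε := supp.inf' hsne marg with hεdef
        have hεpos : 0 < ε := (Finset.lt_inf'_iff hsne).mpr hmargpos
        set y' : Fin r → Fin k → ℝ := fun i j => y i j + ε * (c (i,j) : ℝ) with hy'def
        have hwin : ∀ i j, ((⌊y i j⌋:ℝ) ≤ y' i j) ∧ (y' i j ≤ (⌈y i j⌉:ℝ)) := by
          intro i j
          by_cases hc : c (i,j) = 0
          · rw [hy'def]; simp only [hc]; push_cast
            constructor
            · simpa using Int.floor_le (y i j)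
            · simpa using Int.le_ceil (y i j)
          · have hmem : (i,j) ∈ supp := mem_filter.mpr ⟨mem_univ _, hc⟩
            have hεle : ε ≤ marg (i,j) := Finset.inf'_le _ hmem
            have hcr : ((c (i,j) : ℝ)) ≠ 0 := Int.cast_ne_zero.mpr hc
            obtain ⟨h1, h2⟩ := hfrac (i,j) hmem
            rcases lt_or_gt_of_ne hc with hneg | hpos
            · -- c < 0
              have hcrneg : (c (i,j) : ℝ) < 0 := by exact_mod_cast hneg
              have habs : |(c (i,j) : ℝ)| = -(c (i,j) : ℝ) := abs_of_neg hcrneg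
              have hmargval : marg (i,j) = (y i j - ⌊y i j⌋) / (-(c (i,j):ℝ)) := by
                rw [hmargdef]; simp only [habs]
                rw [if_neg (by omega : ¬ 0 < c (i,j))]
              have hmul : ε * (c (i,j):ℝ) ≥ marg (i,j) * (c (i,j):ℝ) :=
                mul_le_mul_of_nonpos_right hεle (le_of_lt hcrneg)
              have hmv : marg (i,j) * (c (i,j):ℝ) = -(y i j - ⌊y i j⌋) := by
                rw [hmargval, div_mul_eq_mul_div, mul_div_assoc, div_neg, div_self hcr]; ring
              constructor
              · rw [hy'def]; simp only; nlinarith [hmul, hmv]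
              · rw [hy'def]; simp only
                have : ε * (c (i,j):ℝ) < 0 := mul_neg_of_pos_of_neg hεpos hcrneg
                linarith
            · -- c > 0
              have hcrpos : (0:ℝ) < (c (i,j) : ℝ) := by exact_mod_cast hpos
              have habs : |(c (i,j) : ℝ)| = (c (i,j) : ℝ) := abs_of_pos hcrpos
              have hmargval : marg (i,j) = ((⌈y i j⌉:ℝ) - y i j) / ((c (i,j):ℝ)) := by
                rw [hmargdef]; simp only [habs]
                rw [if_pos hpos]
              have hmul : ε * (c (i,j):ℝ) ≤ marg (i,j) * (c (i,j):ℝ) :=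
                mul_le_mul_of_nonneg_right hεle (le_of_lt hcrpos)
              have hmv : marg (i,j) * (c (i,j):ℝ) = (⌈y i j⌉:ℝ) - y i j := by
                rw [hmargval]; field_simp
              constructor
              · rw [hy'def]; simp only
                have : 0 < ε * (c (i,j):ℝ) := mul_pos hεpos hcrpos
                linarith
              · rw [hy'def]; simp only; nlinarith [hmul, hmv]
        have hrow' : ∀ i, ∑ j, y' i j = ∑ j, y i j := by
          intro i
          rw [hy'def]
          simp only
          rw [Finset.sum_add_distrib, ← Finset.mul_sum]
          have hz : (∑ j, (c (i,j) : ℝ)) = 0 := by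
            have := congrArg (fun z : ℤ => (z : ℝ)) (hrows i)
            push_cast at this
            simpa using this
          rw [hz, mul_zero, add_zero]
        have hcol' : ∀ j, ∑ i, y' i j = ∑ i, y i j := by
          intro j
          rw [hy'def]
          simp only
          rw [Finset.sum_add_distrib, ← Finset.mul_sum]
          have hz : (∑ i, (c (i,j) : ℝ)) = 0 := by
            have := congrArg (fun z : ℤ => (z : ℝ)) (hcols j)
            push_cast at this
            simpa using this
          rw [hz, mul_zero, add_zero]
        obtain ⟨em, hem, hemeq⟩ := Finset.exists_mem_eq_inf' hsne marg
        have hcem : c em ≠ 0 := (mem_filter.mp hem).2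
        have hcrm : ((c em : ℝ)) ≠ 0 := Int.cast_ne_zero.mpr hcem
        have hemInt : IsInt (y' em.1 em.2) := by
          rcases lt_or_gt_of_ne hcem with hneg | hpos
          · refine ⟨⌊y em.1 em.2⌋, ?_⟩
            have hcrneg : (c em : ℝ) < 0 := by exact_mod_cast hneg
            have habs : |(c em : ℝ)| = -(c em : ℝ) := abs_of_neg hcrneg
            have hmv : marg em * (c em:ℝ) = -(y em.1 em.2 - ⌊y em.1 em.2⌋) := by
              rw [hmargdef]; simp only [habs]
              rw [if_neg (by omega : ¬ 0 < c em), div_mul_eq_mul_div, mul_div_assoc,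
                div_neg, div_self hcrm]; ring
            rw [hy'def]
            simp only
            rw [show ((em.1, em.2) : Fin r × Fin k) = em from rfl]
            rw [← hemeq] at hmv
            linarith [hmv]
          · refine ⟨⌈y em.1 em.2⌉, ?_⟩
            have hcrpos : (0:ℝ) < (c em : ℝ) := by exact_mod_cast hpos
            have habs : |(c em : ℝ)| = (c em : ℝ) := abs_of_pos hcrpos
            have hmv : marg em * (c em:ℝ) = (⌈y em.1 em.2⌉:ℝ) - y em.1 em.2 := by
              rw [hmargdef]; simp only [habs]
              rw [if_pos hpos]
              field_simp
            rw [hy'def]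
            simp only
            rw [show ((em.1, em.2) : Fin r × Fin k) = em from rfl]
            rw [← hemeq] at hmv
            linarith [hmv]
        have hss : ((univ : Finset (Fin r × Fin k)).filter (fun e => ¬ IsInt (y' e.1 e.2)))
            ⊆ ((univ : Finset (Fin r × Fin k)).filter (fun e => ¬ IsInt (y e.1 e.2))) := by
          intro e he
          have hni := (mem_filter.mp he).2
          apply mem_filter.mpr
          refine ⟨mem_univ _, ?_⟩
          by_cases hc : c e = 0
          · intro hInt
            apply hni
            have : y' e.1 e.2 = y e.1 e.2 := by
              rw [hy'def]; simp only
              rw [show ((e.1, e.2) : Fin r × Fin k) = e from rfl, hc]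
              push_cast; ring
            rw [this]; exact hInt
          · exact hsupp e hc
        have hmemy : em ∈ ((univ : Finset (Fin r × Fin k)).filter
            (fun e => ¬ IsInt (y e.1 e.2))) := mem_filter.mpr ⟨mem_univ _, hsupp em hcem⟩
        have hnmemy' : em ∉ ((univ : Finset (Fin r × Fin k)).filter
            (fun e => ¬ IsInt (y' e.1 e.2))) := by
          intro h
          exact (mem_filter.mp h).2 hemInt
        have hcardlt : ((univ : Finset (Fin r × Fin k)).filter
            (fun e => ¬ IsInt (y' e.1 e.2))).card < ((univ : Finset (Fin r × Fin k)).filter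
            (fun e => ¬ IsInt (y e.1 e.2))).card := by
          apply Finset.card_lt_card
          rw [Finset.ssubset_iff_of_subset hss]
          exact ⟨em, hmemy, hnmemy'⟩
        have hle' : ((univ : Finset (Fin r × Fin k)).filter
            (fun e => ¬ IsInt (y' e.1 e.2))).card ≤ n := by omega
        have hrow'' : ∀ i, IsInt (∑ j, y' i j) := fun i => by rw [hrow' i]; exact hrow i
        have hcol'' : ∀ j, IsInt (∑ i, y' i j) := fun j => by rw [hcol' j]; exact hcol j
        obtain ⟨x, hxw, hxr, hxc⟩ := ih y' hle' hrow'' hcol''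
        refine ⟨x, ?_, ?_, ?_⟩
        · intro i j
          obtain ⟨hw1, hw2⟩ := hwin i j
          constructor
          · exact le_trans (Int.le_floor.mpr hw1) (hxw i j).1
          · exact le_trans (hxw i j).2 (Int.ceil_le.mpr hw2)
        · intro i; rw [hxr i, hrow' i]
        · intro j; rw [hxc j, hcol' j]

lemma matrix_round (r k : ℕ) (a : Fin r → Fin k → ℝ) (n : Fin k → ℕ)
    (hcol : ∀ j, ∑ i, a i j = (n j : ℝ)) :
    ∃ x : Fin r → Fin k → ℤ,
      (∀ i j, ⌊a i j⌋ ≤ x i j ∧ x i j ≤ ⌈a i j⌉) ∧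
      (∀ j, ∑ i, x i j = (n j : ℤ)) ∧
      (∀ i, ⌊∑ j, a i j⌋ ≤ ∑ j, x i j ∧ ∑ j, x i j ≤ ⌈∑ j, a i j⌉) := by
  classical
  set R : Fin r → ℝ := fun i => ∑ j, a i j with hR
  set yh : Fin r → Fin (k+1) → ℝ := fun i => Fin.snoc (a i) ((⌈R i⌉ : ℝ) - R i) with hyh
  have hcs : ∀ i (j : Fin k), yh i j.castSucc = a i j := by
    intro i j; rw [hyh]; simp [Fin.snoc_castSucc]
  have hlast : ∀ i, yh i (Fin.last k) = (⌈R i⌉ : ℝ) - R i := by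
    intro i; rw [hyh]; simp [Fin.snoc_last]
  have hrowEq : ∀ i, ∑ j, yh i j = (⌈R i⌉ : ℝ) := by
    intro i
    rw [Fin.sum_univ_castSucc]
    have h1 : ∑ j : Fin k, yh i (Fin.castSucc j) = R i := by
      rw [hR]; exact Finset.sum_congr rfl (fun j _ => hcs i j)
    rw [h1, hlast]; ring
  have hrow : ∀ i, IsInt (∑ j, yh i j) := fun i => ⟨⌈R i⌉, hrowEq i⟩
  have hcol' : ∀ j : Fin (k+1), IsInt (∑ i, yh i j) := by
    intro j
    refine Fin.lastCases ?_ ?_ j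
    · refine ⟨(∑ i, ⌈R i⌉) - (∑ j, (n j : ℤ)), ?_⟩
      have h1 : ∑ i, R i = ((∑ j, (n j : ℤ) : ℤ) : ℝ) := by
        rw [hR]
        simp only
        rw [Finset.sum_comm]
        push_cast
        exact Finset.sum_congr rfl (fun j _ => hcol j)
      have h2 : ∑ i, yh i (Fin.last k) = (∑ i, (⌈R i⌉:ℝ)) - ∑ i, R i := by
        rw [← Finset.sum_sub_distrib]
        exact Finset.sum_congr rfl (fun i _ => hlast i)
      rw [h2, h1]
      push_cast
      ring
    · intro j0
      refine ⟨(n j0 : ℤ), ?_⟩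
      have h1 : ∑ i, yh i (Fin.castSucc j0) = ∑ i, a i j0 :=
        Finset.sum_congr rfl (fun i _ => hcs i j0)
      rw [h1, hcol j0]; push_cast; ring
  obtain ⟨X, hXw, hXr, hXc⟩ := round_aux r (k+1) _ yh (le_refl _) hrow hcol'
  refine ⟨fun i j => X i j.castSucc, ?_, ?_, ?_⟩
  · intro i j
    have := hXw i j.castSucc
    rwa [hcs i j] at this
  · intro j
    have h1 := hXc j.castSucc
    have h2 : (∑ i, (X i j.castSucc : ℝ)) = ((n j : ℤ) : ℝ) := by
      rw [h1]
      have h3 : ∑ i, yh i (Fin.castSucc j) = ∑ i, a i j :=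
        Finset.sum_congr rfl (fun i _ => hcs i j)
      rw [h3, hcol j]; push_cast; ring
    exact_mod_cast h2
  · intro i
    have h1 : (∑ j : Fin (k+1), (X i j : ℝ)) = ((⌈R i⌉ : ℤ) : ℝ) := by
      rw [hXr i, hrowEq i]
    have h2 : ∑ j : Fin (k+1), X i j = ⌈R i⌉ := by exact_mod_cast h1
    have h3 : ∑ j : Fin (k+1), X i j
        = (∑ j : Fin k, X i j.castSucc) + X i (Fin.last k) := Fin.sum_univ_castSucc _
    have h4 := hXw i (Fin.last k)
    rw [hlast i] at h4
    have h5 : ⌊(⌈R i⌉ : ℝ) - R i⌋ = 0 := by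
      rw [sub_eq_add_neg, add_comm, Int.floor_add_intCast, Int.floor_neg]
      omega
    have h6 : ⌈(⌈R i⌉ : ℝ) - R i⌉ = ⌈R i⌉ - ⌊R i⌋ := by
      rw [sub_eq_add_neg, add_comm, Int.ceil_add_intCast, Int.ceil_neg]
      omega
    have h7 : ⌊R i⌋ ≤ ⌈R i⌉ := Int.floor_le_ceil _
    rw [h5] at h4
    rw [h6] at h4
    constructor
    · show ⌊R i⌋ ≤ ∑ j : Fin k, X i j.castSucc
      omega
    · show ∑ j : Fin k, X i j.castSucc ≤ ⌈R i⌉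
      omega

lemma part_split {α : Type*} [DecidableEq α] :
    ∀ (r : ℕ) (S : Finset α) (m : Fin (r+1) → ℕ), (∑ i, m i) = S.card →
    ∃ f : α → Fin (r+1), ∀ i, (S.filter (fun v => f v = i)).card = m i := by
  intro r
  induction r with
  | zero =>
      intro S m h
      refine ⟨fun _ => 0, fun i => ?_⟩
      have hi : i = 0 := by omega
      subst hi
      rw [Fin.sum_univ_succ] at h
      simp only [Finset.univ_eq_empty, Finset.sum_empty, add_zero] at h
      have : S.filter (fun v => (0 : Fin 1) = 0) = S := by
        apply Finset.filter_true_of_mem; intro v _; rfl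
      rw [this, ← h]
  | succ r ih =>
      intro S m h
      have h0 : m 0 ≤ S.card := by
        rw [← h, Fin.sum_univ_succ]; omega
      obtain ⟨T, hTs, hTc⟩ := Finset.exists_subset_card_eq h0
      have hrec : (∑ i : Fin (r+1), m i.succ) = (S \ T).card := by
        rw [Finset.card_sdiff_of_subset hTs, hTc]
        have h2 := Fin.sum_univ_succ m
        omega
      obtain ⟨f', hf'⟩ := ih (S \ T) (fun i => m i.succ) hrec
      refine ⟨fun v => if v ∈ T then 0 else (f' v).succ, fun i => ?_⟩
      refine Fin.cases ?_ ?_ i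
      · have he : S.filter (fun v => (if v ∈ T then (0:Fin (r+2)) else (f' v).succ) = 0) = T := by
          ext v
          simp only [mem_filter]
          constructor
          · rintro ⟨hvS, hv⟩
            by_contra hvT
            rw [if_neg hvT] at hv
            exact Fin.succ_ne_zero _ hv
          · intro hvT
            exact ⟨hTs hvT, by rw [if_pos hvT]⟩
        rw [he, hTc]
      · intro i0
        have he : S.filter (fun v => (if v ∈ T then (0:Fin (r+2)) else (f' v).succ) = i0.succ)
            = (S \ T).filter (fun v => f' v = i0) := by
          ext v
          simp only [mem_filter, Finset.mem_sdiff]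
          constructor
          · rintro ⟨hvS, hv⟩
            by_cases hvT : v ∈ T
            · rw [if_pos hvT] at hv; exact absurd hv.symm (Fin.succ_ne_zero _)
            · rw [if_neg hvT] at hv
              exact ⟨⟨hvS, hvT⟩, Fin.succ_injective _ hv⟩
          · rintro ⟨⟨hvS, hvT⟩, hv⟩
            exact ⟨hvS, by rw [if_neg hvT, hv]⟩
        rw [he, hf' i0]

theorem even_split_exists {α : Type*} [DecidableEq α] (k r : ℕ)
    (Vs : Fin k → Finset α)
    (hdisj : Pairwise (Function.onFun Disjoint Vs))
    (V : Finset α) (hV : V = Finset.univ.biUnion Vs)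
    (δ : Fin r → ℝ) (hδ : ∀ i, 0 ≤ δ i) (hsum : ∑ i, δ i = 1) :
    ∃ g : α → Fin r,
      (∀ i : Fin r, ∀ j : Fin k,
        ⌊δ i * ((Vs j).card : ℝ)⌋ ≤ (((Vs j).filter (fun v => g v = i)).card : ℤ) ∧
        (((Vs j).filter (fun v => g v = i)).card : ℤ) ≤ ⌈δ i * ((Vs j).card : ℝ)⌉) ∧
      (∀ i : Fin r,
        ⌊δ i * (V.card : ℝ)⌋ ≤ ((V.filter (fun v => g v = i)).card : ℤ) ∧
        ((V.filter (fun v => g v = i)).card : ℤ) ≤ ⌈δ i * (V.card : ℝ)⌉) := by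
  classical
  cases r with
  | zero => exact absurd hsum (by simp)
  | succ r' =>
    set n : Fin k → ℕ := fun j => (Vs j).card with hn
    have hc : ∀ j, ∑ i, δ i * (n j : ℝ) = (n j : ℝ) := by
      intro j; rw [← Finset.sum_mul, hsum, one_mul]
    obtain ⟨x, hxw, hxc, hxr⟩ := matrix_round (r'+1) k (fun i j => δ i * (n j:ℝ)) n hc
    have hx0 : ∀ i j, 0 ≤ x i j := fun i j =>
      le_trans (Int.floor_nonneg.mpr (mul_nonneg (hδ i) (Nat.cast_nonneg _))) (hxw i j).1
    have hsplit : ∀ j : Fin k, ∃ f : α → Fin (r'+1),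
        ∀ i, ((Vs j).filter (fun v => f v = i)).card = (x i j).toNat := by
      intro j
      apply part_split
      have h1 : ∑ i, ((x i j).toNat : ℤ) = ((n j : ℕ) : ℤ) := by
        rw [Finset.sum_congr rfl (fun i _ => Int.toNat_of_nonneg (hx0 i j)), hxc j]
      exact_mod_cast h1
    choose F hF using hsplit
    set g : α → Fin (r'+1) := fun v => if h : ∃ j, v ∈ Vs j then F h.choose v else 0 with hg
    have hgeq : ∀ j, ∀ v ∈ Vs j, g v = F j v := by
      intro j v hv
      have hex : ∃ j', v ∈ Vs j' := ⟨j, hv⟩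
      rw [hg]
      simp only [dif_pos hex]
      have hj : hex.choose = j := by
        by_contra hne
        exact (Finset.disjoint_left.mp (hdisj hne)) hex.choose_spec hv
      rw [hj]
    have hcount : ∀ i j, ((Vs j).filter (fun v => g v = i)).card = (x i j).toNat := by
      intro i j
      rw [← hF j i]
      apply congrArg
      apply Finset.filter_congr
      intro v hv
      rw [hgeq j v hv]
    have hcastc : ∀ i j, (((Vs j).filter (fun v => g v = i)).card : ℤ) = x i j := by
      intro i j
      rw [hcount i j]
      exact Int.toNat_of_nonneg (hx0 i j)
    have hdisj' : ∀ j1 ∈ (univ : Finset (Fin k)), ∀ j2 ∈ univ, j1 ≠ j2 →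
        Disjoint (Vs j1) (Vs j2) := fun j1 _ j2 _ hne => hdisj hne
    have hNcard : V.card = ∑ j, n j := by
      rw [hV]; exact Finset.card_biUnion hdisj'
    have hfilterV : ∀ i, ((V.filter (fun v => g v = i)).card : ℤ) = ∑ j, x i j := by
      intro i
      rw [hV, Finset.filter_biUnion]
      rw [Finset.card_biUnion (fun j1 _ j2 _ hne =>
        Finset.disjoint_filter_filter (hdisj hne))]
      push_cast
      exact Finset.sum_congr rfl fun j _ => hcastc i j
    refine ⟨g, ?_, ?_⟩
    · intro i j
      rw [hcastc i j]
      exact hxw i j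
    · intro i
      rw [hfilterV i]
      have heq : δ i * (V.card : ℝ) = ∑ j, δ i * (n j : ℝ) := by
        rw [hNcard, ← Finset.mul_sum]
        push_cast
        ring
      rw [heq]
      exact hxr i
end

section
/- Let w : 𝒫(X) → [0,1] be a weight-function on a finite set X, and for each nonnegative integer i define (π_i w)(A) = 2^{-(i+1)} if w(A) ≥ 2^{-i} and 0 otherwise. Then ∑_{i≥0} S(π_i w) lies in the interval [S(w)/2, S(w)], where S(u) = ∑_{A ⊆ X} u(A). -/
lemma geom_summable : Summable (fun i : ℕ => (2 : ℝ) ^ (-(i : ℤ) - 1)) := by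
  have h : (fun i : ℕ => (2 : ℝ) ^ (-(i : ℤ) - 1)) = fun i : ℕ => 2⁻¹ * (2⁻¹ : ℝ) ^ i := by
    funext i
    rw [zpow_sub₀ (by norm_num), zpow_neg, zpow_natCast, ← inv_pow]
    ring
  rw [h]
  exact (summable_geometric_of_lt_one (by norm_num) (by norm_num)).mul_left _

lemma ind_summable (x : ℝ) :
    Summable (fun i : ℕ => if (2 : ℝ) ^ (-(i : ℤ)) ≤ x then (2 : ℝ) ^ (-(i : ℤ) - 1) else 0) := by
  apply Summable.of_nonneg_of_le (fun i => by positivity) (fun i => ?_) geom_summable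
  split
  · exact le_refl _
  · positivity

lemma key (x : ℝ) (hx : x ∈ Set.Icc (0 : ℝ) 1) :
    (∑' i : ℕ, if (2 : ℝ) ^ (-(i : ℤ)) ≤ x then (2 : ℝ) ^ (-(i : ℤ) - 1) else 0)
      ∈ Set.Icc (x / 2) x := by
  obtain ⟨hx0, hx1⟩ := hx
  rcases eq_or_lt_of_le hx0 with h0 | h0
  · have h : ∀ i : ℕ, (if (2 : ℝ) ^ (-(i : ℤ)) ≤ x then (2 : ℝ) ^ (-(i : ℤ) - 1) else 0) = 0 := by
      intro i
      rw [if_neg (by rw [← h0]; exact not_le.mpr (by positivity))]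
    rw [tsum_congr h, tsum_zero, ← h0]
    constructor <;> norm_num
  · -- x > 0 : find minimal n with 2^{-n} ≤ x
    have hex : ∃ n : ℕ, (2 : ℝ) ^ (-(n : ℤ)) ≤ x := by
      obtain ⟨n, hn⟩ := exists_pow_lt_of_lt_one h0 (by norm_num : (2 : ℝ)⁻¹ < 1)
      exact ⟨n, by rw [zpow_neg, zpow_natCast, ← inv_pow]; exact hn.le⟩
    obtain ⟨n, hspec, hmin⟩ : ∃ n : ℕ, (2 : ℝ) ^ (-(n : ℤ)) ≤ x ∧
        ∀ m < n, ¬ (2 : ℝ) ^ (-(m : ℤ)) ≤ x :=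
      ⟨Nat.find hex, Nat.find_spec hex, fun m h => Nat.find_min hex h⟩
    have hiff : ∀ i : ℕ, ((2 : ℝ) ^ (-(i : ℤ)) ≤ x ↔ n ≤ i) := by
      intro i
      constructor
      · intro h
        by_contra hc
        exact hmin i (by omega) h
      · intro h
        refine le_trans ?_ hspec
        exact zpow_le_zpow_right₀ one_le_two (by omega)
    have hfun : (fun i : ℕ => if (2 : ℝ) ^ (-(i : ℤ)) ≤ x then (2 : ℝ) ^ (-(i : ℤ) - 1) else 0)
        = fun i : ℕ => if n ≤ i then (2 : ℝ) ^ (-(i : ℤ) - 1) else 0 := by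
      funext i; exact if_congr (hiff i) rfl rfl
    have hsummable : Summable
        (fun i : ℕ => if n ≤ i then (2 : ℝ) ^ (-(i : ℤ) - 1) else 0) := by
      rw [← hfun]; exact ind_summable x
    have hval : (∑' i : ℕ, if (2 : ℝ) ^ (-(i : ℤ)) ≤ x then (2 : ℝ) ^ (-(i : ℤ) - 1) else 0)
        = (2 : ℝ) ^ (-(n : ℤ)) := by
      rw [hfun]
      rw [← Summable.sum_add_tsum_nat_add n hsummable]
      have h1 : ∑ i ∈ Finset.range n, (if n ≤ i then (2 : ℝ) ^ (-(i : ℤ) - 1) else 0) = 0 := by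
        apply Finset.sum_eq_zero
        intro i hi
        rw [if_neg]
        simp at hi; omega
      have h2 : (fun i : ℕ => if n ≤ i + n then (2 : ℝ) ^ (-((i + n : ℕ) : ℤ) - 1) else 0)
          = fun i : ℕ => (2 : ℝ) ^ (-(n : ℤ) - 1) * (2⁻¹ : ℝ) ^ i := by
        funext i
        rw [if_pos (by omega)]
        push_cast
        rw [show (-(↑i + ↑n) - 1 : ℤ) = (-(n : ℤ) - 1) + (-(i : ℤ)) by ring,
          zpow_add₀ (by norm_num : (2:ℝ) ≠ 0), zpow_neg, zpow_natCast, ← inv_pow]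
      rw [h1, zero_add, h2, tsum_mul_left, tsum_geometric_of_lt_one (by norm_num) (by norm_num)]
      rw [zpow_sub₀ (by norm_num : (2:ℝ) ≠ 0)]
      norm_num
    rw [hval]
    refine ⟨?_, hspec⟩
    -- x / 2 ≤ 2^{-n}
    match n, hmin with
    | 0, _ => norm_num; linarith
    | (m + 1), hmin =>
      have hm : ¬ (2 : ℝ) ^ (-(m : ℤ)) ≤ x := hmin m (by omega)
      push_neg at hm
      have : (2 : ℝ) ^ (-(m : ℤ)) = 2 * (2 : ℝ) ^ (-((m + 1 : ℕ) : ℤ)) := by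
        push_cast
        rw [show (-(↑m + 1) : ℤ) = -(m : ℤ) - 1 by ring, zpow_sub₀ (by norm_num : (2:ℝ) ≠ 0)]
        ring
      rw [this] at hm
      linarith

theorem sum_S_pi_w_bounds {X : Type*} [Fintype X] [DecidableEq X]
    (w : Finset X → ℝ) (hw : ∀ A, w A ∈ Set.Icc (0 : ℝ) 1) :
    (∑' i : ℕ, ∑ A : Finset X,
        (if (2 : ℝ) ^ (-(i : ℤ)) ≤ w A then (2 : ℝ) ^ (-(i : ℤ) - 1) else 0))
      ∈ Set.Icc ((∑ A : Finset X, w A) / 2) (∑ A : Finset X, w A) := by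
  rw [Summable.tsum_finsetSum (fun A _ => ind_summable (w A))]
  constructor
  · rw [div_le_iff₀ (by norm_num : (0:ℝ) < 2)] at *
    calc ∑ A : Finset X, w A ≤ ∑ A : Finset X,
          (∑' i : ℕ, if (2 : ℝ) ^ (-(i : ℤ)) ≤ w A then (2 : ℝ) ^ (-(i : ℤ) - 1) else 0) * 2 := by
          apply Finset.sum_le_sum
          intro A _
          have := (key (w A) (hw A)).1
          linarith
      _ = (∑ A : Finset X,
          ∑' i : ℕ, if (2 : ℝ) ^ (-(i : ℤ)) ≤ w A then (2 : ℝ) ^ (-(i : ℤ) - 1) else 0) * 2 := by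
          rw [Finset.sum_mul]
  · exact Finset.sum_le_sum (fun A _ => (key (w A) (hw A)).2)
end

section
/- Let w : 𝒫(X) → [0,1] be a weight-function on a finite set X, with (π_i w)(A) = 2^{-(i+1)}·[w(A) ≥ 2^{-i}]. Define H(u) = ∑_{A: u(A)>0} u(A)·ln(1/u(A)) and S(u) = ∑_{A} u(A). Then ∑_{i≥0} H(π_i w) ≤ 3·S(w) + 2·H(w). -/
theorem sum_H_pi_w_le {X : Type*} [Fintype X] [DecidableEq X]
    (w : Finset X → ℝ) (hw : ∀ A, w A ∈ Set.Icc (0 : ℝ) 1)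
    (piw : ℕ → Finset X → ℝ)
    (hpiw : ∀ i A, piw i A = if (2 : ℝ) ^ (-(i : ℤ)) ≤ w A then (2 : ℝ) ^ (-(i : ℤ) - 1) else 0)
    (H : (Finset X → ℝ) → ℝ)
    (hH : ∀ u : Finset X → ℝ,
      H u = ∑ A ∈ Finset.univ.filter (fun A : Finset X => 0 < u A), u A * Real.log (1 / u A)) :
    (∑' i : ℕ, H (piw i)) ≤ 3 * (∑ A : Finset X, w A) + 2 * H w := by
  set L : ℝ := Real.log 2 with hL
  have hLpos : 0 < L := Real.log_pos (by norm_num)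
  have hLlt : L < 0.6931472 := lt_trans Real.log_two_lt_d9 (by norm_num)
  -- powers of 2
  have hpow : ∀ i : ℕ, (2 : ℝ) ^ (-(i : ℤ) - 1) = (1/2 : ℝ) ^ (i + 1) := by
    intro i
    rw [show -(i : ℤ) - 1 = -((i + 1 : ℕ) : ℤ) by push_cast; ring, zpow_neg, zpow_natCast,
      one_div, inv_pow]
  have hpow' : ∀ i : ℕ, (2 : ℝ) ^ (-(i : ℤ)) = (1/2 : ℝ) ^ i := by
    intro i
    rw [zpow_neg, zpow_natCast, one_div, inv_pow]
  set c : ℕ → ℝ := fun i => ((i : ℝ) + 1) * (1/2 : ℝ) ^ (i + 1) * L with hc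
  have hcnonneg : ∀ i, 0 ≤ c i := by
    intro i; positivity
  have hs1 : Summable (fun n : ℕ => (n : ℝ) * (1/2 : ℝ) ^ n) := by
    have := summable_pow_mul_geometric_of_norm_lt_one (R := ℝ) 1 (r := (1/2 : ℝ)) (by
      rw [Real.norm_eq_abs, abs_of_pos] <;> norm_num)
    simpa using this
  have hs2 : Summable (fun n : ℕ => ((1/2 : ℝ)) ^ n) :=
    summable_geometric_of_lt_one (by norm_num) (by norm_num)
  have hsumc : Summable c := by
    have h := ((hs1.add hs2).mul_left (L / 2))
    refine h.congr ?_
    intro n; simp only [hc]; ring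
  -- the function g
  set g : ℕ → Finset X → ℝ := fun i A => if (1/2 : ℝ) ^ i ≤ w A then c i else 0 with hg
  have hgnonneg : ∀ i A, 0 ≤ g i A := by
    intro i A; simp only [hg]; split <;> [exact hcnonneg i; exact le_rfl]
  have hgle : ∀ i A, g i A ≤ c i := by
    intro i A; simp only [hg]; split <;> [exact le_rfl; exact hcnonneg i]
  have hgsum : ∀ A : Finset X, Summable (fun i => g i A) := fun A =>
    Summable.of_nonneg_of_le (fun i => hgnonneg i A) (fun i => hgle i A) hsumc
  -- Step 1: H (piw i) = ∑ A, g i A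
  have hstep1 : ∀ i, H (piw i) = ∑ A : Finset X, g i A := by
    intro i
    rw [hH]
    have hfilt : Finset.univ.filter (fun A : Finset X => 0 < piw i A)
        = Finset.univ.filter (fun A : Finset X => (1/2 : ℝ) ^ i ≤ w A) := by
      ext A
      simp only [Finset.mem_filter, Finset.mem_univ, true_and]
      rw [hpiw i A, hpow', hpow]
      constructor
      · intro h
        by_contra hc'
        rw [if_neg hc'] at h
        exact lt_irrefl 0 h
      · intro h
        rw [if_pos h]
        positivity
    rw [hfilt]
    rw [show (∑ A : Finset X, g i A)
        = ∑ A ∈ Finset.univ.filter (fun A : Finset X => (1/2 : ℝ) ^ i ≤ w A), c i by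
      rw [Finset.sum_filter]]
    refine Finset.sum_congr rfl ?_
    intro A hA
    simp only [Finset.mem_filter] at hA
    rw [hpiw i A, hpow', hpow, if_pos hA.2]
    have h1 : (1 : ℝ) / ((1/2 : ℝ) ^ (i + 1)) = (2 : ℝ) ^ (i + 1) := by
      rw [one_div, one_div, inv_pow, inv_inv]
    rw [h1, Real.log_pow]
    simp only [hc]
    push_cast
    ring
  -- per-A bound
  have hperA : ∀ A : Finset X, (∑' i, g i A)
      ≤ 3 * w A + 2 * (if 0 < w A then w A * Real.log (1 / w A) else 0) := by
    intro A
    by_cases hwA : 0 < w A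
    · -- find least k with (1/2)^k ≤ w A
      have hex : ∃ n : ℕ, (1/2 : ℝ) ^ n ≤ w A := by
        obtain ⟨n, hn⟩ := exists_pow_lt_of_lt_one hwA (show (1/2 : ℝ) < 1 by norm_num)
        exact ⟨n, hn.le⟩
      set k := Nat.find hex with hk
      have hkle : (1/2 : ℝ) ^ k ≤ w A := Nat.find_spec hex
      have hgeq : ∀ i, g i A = if k ≤ i then c i else 0 := by
        intro i
        simp only [hg]
        by_cases hki : k ≤ i
        · rw [if_pos hki, if_pos]
          calc (1/2 : ℝ) ^ i ≤ (1/2 : ℝ) ^ k :=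
                pow_le_pow_of_le_one (by norm_num) (by norm_num) hki
            _ ≤ w A := hkle
        · rw [if_neg hki, if_neg]
          exact Nat.find_min hex (by omega)
      -- compute the tsum
      have hsumg' : Summable (fun i => if k ≤ i then c i else 0) := by
        refine (hgsum A).congr ?_
        intro i; rw [hgeq i]
      have htsum : (∑' i, g i A) = ∑' j : ℕ, c (j + k) := by
        rw [tsum_congr hgeq]
        rw [← Summable.sum_add_tsum_nat_add (f := fun i => if k ≤ i then c i else 0) k hsumg']
        have h0 : (∑ i ∈ Finset.range k, if k ≤ i then c i else 0) = 0 := by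
          refine Finset.sum_eq_zero ?_
          intro i hi
          rw [Finset.mem_range] at hi
          rw [if_neg (by omega)]
        rw [h0, zero_add]
        refine tsum_congr ?_
        intro j
        rw [if_pos (by omega)]
      have hval : (∑' j : ℕ, c (j + k)) = ((k : ℝ) + 2) * (1/2 : ℝ) ^ k * L := by
        have heq : ∀ j : ℕ, c (j + k)
            = (L * (1/2 : ℝ) ^ (k + 1)) * ((j : ℝ) * (1/2 : ℝ) ^ j + ((k : ℝ) + 1) * (1/2 : ℝ) ^ j) := by
          intro j
          simp only [hc]
          push_cast
          rw [show j + k + 1 = (j) + (k + 1) by ring, pow_add]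
          ring
        rw [tsum_congr heq, tsum_mul_left, Summable.tsum_add (hs1) (hs2.mul_left _)]
        rw [tsum_mul_left, tsum_geometric_of_lt_one (by norm_num) (by norm_num),
          tsum_coe_mul_geometric_of_norm_lt_one (by rw [Real.norm_eq_abs, abs_of_pos] <;> norm_num)]
        rw [pow_succ]
        norm_num
        ring
      rw [htsum, hval, if_pos hwA]
      -- now the key inequality
      have hlog0 : 0 ≤ Real.log (1 / w A) := by
        apply Real.log_nonneg
        rw [le_div_iff₀ hwA, one_mul]
        exact (hw A).2
      rcases Nat.eq_zero_or_pos k with hk0 | hkpos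
      · -- k = 0 : w A = 1
        have hw1 : w A = 1 := le_antisymm (hw A).2 (by simpa [hk0] using hkle)
        rw [hk0, hw1]
        simp [Real.log_one]
        nlinarith [hLlt, hLpos]
      · -- k = m + 1
        obtain ⟨m, hm⟩ : ∃ m, k = m + 1 := ⟨k - 1, by omega⟩
        rw [hm]
        have hlt : w A < (1/2 : ℝ) ^ m := by
          by_contra h
          exact Nat.find_min hex (show m < k by omega) (le_of_not_gt h)
        have hlog : (m : ℝ) * L ≤ Real.log (1 / w A) := by
          have h1 : Real.log (w A) < Real.log ((1/2 : ℝ) ^ m) := Real.log_lt_log hwA hlt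
          rw [Real.log_pow, one_div, Real.log_inv] at h1
          rw [one_div, Real.log_inv]
          nlinarith
        have hp : (0 : ℝ) < (1/2 : ℝ) ^ (m + 1) := by positivity
        have hple : (1/2 : ℝ) ^ (m + 1) ≤ w A := hm ▸ hkle
        have hmL : 0 ≤ (m : ℝ) * L := by positivity
        have key : 2 * ((1/2 : ℝ) ^ (m + 1) * ((m : ℝ) * L)) ≤ 2 * (w A * Real.log (1 / w A)) := by
          gcongr
        have h3 : 3 * (1/2 : ℝ) ^ (m + 1) ≤ 3 * w A := by linarith
        have hfin : ((m : ℝ) + 1 + 2) * (1/2 : ℝ) ^ (m + 1) * L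
            ≤ 3 * (1/2 : ℝ) ^ (m + 1) + 2 * ((1/2 : ℝ) ^ (m + 1) * ((m : ℝ) * L)) := by
          have hm0 : (0 : ℝ) ≤ (m : ℝ) := Nat.cast_nonneg m
          nlinarith [hp, hLpos, hLlt, hm0]
        push_cast
        linarith
    · -- w A = 0
      have hw0 : w A = 0 := le_antisymm (le_of_not_gt hwA) (hw A).1
      have : ∀ i, g i A = 0 := by
        intro i
        simp only [hg]
        rw [if_neg]
        rw [hw0]
        exact not_le.mpr (by positivity)
      rw [tsum_congr this, tsum_zero, if_neg hwA, hw0]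
      norm_num
  -- put it together
  calc (∑' i : ℕ, H (piw i)) = ∑' i : ℕ, ∑ A : Finset X, g i A := tsum_congr hstep1
    _ = ∑ A : Finset X, ∑' i : ℕ, g i A := Summable.tsum_finsetSum (fun A _ => hgsum A)
    _ ≤ ∑ A : Finset X, (3 * w A + 2 * (if 0 < w A then w A * Real.log (1 / w A) else 0)) :=
        Finset.sum_le_sum (fun A _ => hperA A)
    _ = 3 * (∑ A : Finset X, w A) + 2 * H w := by
        rw [hH w, Finset.sum_add_distrib, ← Finset.mul_sum, ← Finset.mul_sum, ← Finset.sum_filter]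
end

section
/- Let 𝒜 be a family of k-element subsets of a finite set X with |𝒜| = C(x, k) for some real x ≥ k. Then the lower shadow Δ𝒜 (the family of (k−1)-element sets obtained by removing one element from a set in 𝒜) satisfies |Δ𝒜| ≥ C(x, k−1). -/
/-- Generalized binomial coefficient `C(x, k)` for real `x`. -/
noncomputable def rchoose (x : ℝ) (k : ℕ) : ℝ :=
  (∏ i ∈ Finset.range k, (x - i)) / (k.factorial : ℝ)

/-!
Shift `𝒜` towards a point `u`: the UV-compressions with `U = {u}` preserve `|𝒜|` and do not
increase `|∂ 𝒜|`. In a shifted family the shadow of the sets avoiding `u` lies in the link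
`L = {s \ {u} : u ∈ s ∈ 𝒜}`. Hence `|L| ≥ C(x - 1, k - 1)`: otherwise, by Pascal's rule, more than
`C(x - 1, k)` sets avoid `u`, and induction on `|𝒜|` makes their shadow larger than `L`. Since
`∂ 𝒜` contains both `L` and `{t ∪ {u} : t ∈ ∂ L}`, induction on `k` and Pascal's rule
`C(x, k - 1) = C(x - 1, k - 1) + C(x - 1, k - 2)` conclude.
-/

open Finset Polynomial

lemma rchoose_eq_descPochhammer_eval_div (x : ℝ) (k : ℕ) :
    rchoose x k = (descPochhammer ℝ k).eval x / k.factorial := by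
  rw [rchoose, descPochhammer_eval_eq_prod_range]

lemma rchoose_eq_ringChoose (x : ℝ) (k : ℕ) : rchoose x k = Ring.choose x k := by
  rw [Ring.choose_eq_smul, rchoose_eq_descPochhammer_eval_div, ← aeval_eq_smeval, aeval_def,
    ← eval_map, descPochhammer_map, smul_eq_mul, div_eq_inv_mul]

lemma rchoose_zero (x : ℝ) : rchoose x 0 = 1 := by simp [rchoose]

lemma rchoose_natCast (n k : ℕ) : rchoose n k = n.choose k := by
  rw [rchoose_eq_descPochhammer_eval_div, Nat.cast_choose_eq_descPochhammer_div]

lemma rchoose_succ_succ (x : ℝ) (k : ℕ) :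
    rchoose (x + 1) (k + 1) = rchoose x k + rchoose x (k + 1) := by
  simp only [rchoose_eq_ringChoose, Ring.choose_succ_succ]

lemma rchoose_nonneg {x : ℝ} {k : ℕ} (hx : (k : ℝ) - 1 ≤ x) : 0 ≤ rchoose x k := by
  rw [rchoose_eq_descPochhammer_eval_div]
  exact div_nonneg (descPochhammer_nonneg hx) (Nat.cast_nonneg _)

lemma rchoose_monotoneOn (k : ℕ) : MonotoneOn (rchoose · k) (Set.Ici ((k : ℝ) - 1)) := by
  intro s hs t ht hst
  simp only [rchoose_eq_descPochhammer_eval_div]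
  exact div_le_div_of_nonneg_right (monotoneOn_descPochhammer_eval k hs ht hst) (Nat.cast_nonneg _)

lemma rchoose_self (k : ℕ) : rchoose k k = 1 := by
  rw [rchoose_natCast, Nat.choose_self, Nat.cast_one]

lemma one_le_rchoose {x : ℝ} {k : ℕ} (hx : (k : ℝ) ≤ x) : 1 ≤ rchoose x k :=
  rchoose_self k ▸ rchoose_monotoneOn k (by simp) (by simp; linarith) hx

open scoped FinsetFamily

namespace Finset

variable {α : Type*} {𝒜 : Finset (Finset α)} {s : Finset α} {u a : α} {r : ℕ}

lemma nonempty_of_rchoose_le_card {x : ℝ} (hx : (r : ℝ) ≤ x) (h : rchoose x r ≤ #𝒜) :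
    𝒜.Nonempty :=
  card_pos.1 <| Nat.cast_pos.1 <| zero_lt_one.trans_le <| (one_le_rchoose hx).trans h

variable [DecidableEq α]

lemma _root_.Set.Sized.memberSubfamily (h𝒜 : (𝒜 : Set (Finset α)).Sized (r + 1)) :
    (𝒜.memberSubfamily u : Set (Finset α)).Sized r := by
  intro s hs
  rw [mem_coe, mem_memberSubfamily] at hs
  simpa [card_insert_of_notMem hs.2] using h𝒜 hs.1

lemma _root_.Set.Sized.nonMemberSubfamily (h𝒜 : (𝒜 : Set (Finset α)).Sized r) :
    (𝒜.nonMemberSubfamily u : Set (Finset α)).Sized r :=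
  h𝒜.mono (filter_subset _ _)

lemma memberSubfamily_subset_shadow : 𝒜.memberSubfamily u ⊆ ∂ 𝒜 := fun _ hs =>
  mem_shadow_iff_insert_mem.2 ⟨u, (mem_memberSubfamily.1 hs).2, (mem_memberSubfamily.1 hs).1⟩

lemma notMem_of_mem_shadow_memberSubfamily (hs : s ∈ ∂ (𝒜.memberSubfamily u)) : u ∉ s := by
  obtain ⟨t, ht, hst⟩ := exists_subset_of_mem_shadow hs
  exact fun hu => (mem_memberSubfamily.1 ht).2 (hst hu)

lemma image_insert_shadow_memberSubfamily_subset_shadow :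
    (∂ (𝒜.memberSubfamily u)).image (insert u) ⊆ ∂ 𝒜 := by
  intro t ht
  obtain ⟨s, hs, rfl⟩ := mem_image.1 ht
  obtain ⟨a, has, hins⟩ := mem_shadow_iff_insert_mem.1 hs
  obtain ⟨hins, hua⟩ := mem_memberSubfamily.1 hins
  refine mem_shadow_iff_insert_mem.2 ⟨a, ?_, by rwa [insert_comm]⟩
  rw [mem_insert, not_or]
  exact ⟨fun h => hua (h ▸ mem_insert_self a s), has⟩

lemma card_memberSubfamily_add_card_shadow_le :
    #(𝒜.memberSubfamily u) + #(∂ (𝒜.memberSubfamily u)) ≤ #(∂ 𝒜) := by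
  have hinj : Set.InjOn (insert u) (∂ (𝒜.memberSubfamily u) : Set (Finset α)) :=
    fun s hs t ht hst => by
      rw [← erase_insert (notMem_of_mem_shadow_memberSubfamily hs), hst,
        erase_insert (notMem_of_mem_shadow_memberSubfamily ht)]
  have hdisj : Disjoint (𝒜.memberSubfamily u) ((∂ (𝒜.memberSubfamily u)).image (insert u)) := by
    rw [disjoint_left]
    intro s hs hs'
    obtain ⟨t, -, rfl⟩ := mem_image.1 hs'
    exact (mem_memberSubfamily.1 hs).2 (mem_insert_self u t)
  rw [← card_image_of_injOn hinj, ← card_union_of_disjoint hdisj]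
  exact card_le_card (union_subset memberSubfamily_subset_shadow
    image_insert_shadow_memberSubfamily_subset_shadow)

def IsShifted (u : α) (𝒜 : Finset (Finset α)) : Prop :=
  ∀ v, UV.IsCompressed {u} {v} 𝒜

lemma IsShifted.insert_erase_mem (h𝒜 : IsShifted u 𝒜) (hs : s ∈ 𝒜) (ha : a ∈ s) (hu : u ∉ s) :
    insert u (s.erase a) ∈ 𝒜 := by
  have hmem := UV.compress_mem_compression (u := {u}) (v := {a}) hs
  rw [(h𝒜 a).eq, UV.compress_of_disjoint_of_le (by simpa) (by simpa)] at hmem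
  convert hmem using 1
  ext b
  simp only [mem_insert, mem_erase, sup_eq_union, mem_sdiff, mem_union, mem_singleton]
  grind

lemma IsShifted.shadow_nonMemberSubfamily_subset (h𝒜 : IsShifted u 𝒜) :
    ∂ (𝒜.nonMemberSubfamily u) ⊆ 𝒜.memberSubfamily u := by
  intro s hs
  obtain ⟨a, has, hins⟩ := mem_shadow_iff_insert_mem.1 hs
  obtain ⟨hins, hu⟩ := mem_nonMemberSubfamily.1 hins
  have hmem := h𝒜.insert_erase_mem hins (mem_insert_self a s) hu
  rw [erase_insert has] at hmem
  exact mem_memberSubfamily.2 ⟨hmem, fun h => hu (mem_insert_of_mem h)⟩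

lemma IsShifted.memberSubfamily_nonempty (h𝒜 : IsShifted u 𝒜)
    (hsized : (𝒜 : Set (Finset α)).Sized (r + 1)) (hne : 𝒜.Nonempty) :
    (𝒜.memberSubfamily u).Nonempty := by
  obtain ⟨s, hs⟩ := hne
  by_cases hu : u ∈ s
  · exact ⟨s.erase u, mem_memberSubfamily.2 ⟨by rwa [insert_erase hu], notMem_erase u s⟩⟩
  · obtain ⟨a, ha⟩ := card_pos.1 (by rw [hsized hs]; exact r.succ_pos)
    exact ⟨s.erase a, mem_memberSubfamily.2
      ⟨h𝒜.insert_erase_mem hs ha hu, fun h => hu (mem_of_mem_erase h)⟩⟩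

lemma filter_mem_ssubset_filter_mem_compression {v : α} (h : 𝓒 {u} {v} 𝒜 ≠ 𝒜) :
    {s ∈ 𝒜 | u ∈ s} ⊂ {s ∈ 𝓒 {u} {v} 𝒜 | u ∈ s} := by
  refine ssubset_iff_subset_ne.2 ⟨fun s hs => ?_, fun heq => ?_⟩
  · obtain ⟨hs, hu⟩ := mem_filter.1 hs
    have hfix : UV.compress {u} {v} s = s := by
      rw [UV.compress, if_neg fun h => disjoint_singleton_left.1 h.1 hu]
    exact mem_filter.2 ⟨hfix ▸ UV.compress_mem_compression hs, hu⟩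
  · obtain ⟨t, ht, htn⟩ := not_subset.1 fun hsub =>
      h (eq_of_subset_of_card_le hsub (UV.card_compression _ _ _).ge)
    have hu : u ∈ t := singleton_subset_iff.1 (UV.le_of_mem_compression_of_notMem ht htn)
    exact htn (mem_filter.1 (heq ▸ mem_filter.2 ⟨ht, hu⟩ : t ∈ {s ∈ 𝒜 | u ∈ s})).1

theorem exists_isShifted (u : α) {𝒜 : Finset (Finset α)} (h𝒜 : (𝒜 : Set (Finset α)).Sized r) :
    ∃ ℬ : Finset (Finset α), IsShifted u ℬ ∧ (ℬ : Set (Finset α)).Sized r ∧ #ℬ = #𝒜 ∧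
      #(∂ ℬ) ≤ #(∂ 𝒜) := by
  by_cases h : IsShifted u 𝒜
  · exact ⟨𝒜, h, h𝒜, rfl, le_rfl⟩
  obtain ⟨v, hv⟩ := not_forall.1 h
  have hshadow : #(∂ (𝓒 {u} {v} 𝒜)) ≤ #(∂ 𝒜) :=
    UV.card_shadow_compression_le _ _ fun w hw => ⟨v, mem_singleton_self v, by
      rw [mem_singleton.1 hw, erase_singleton, erase_singleton]; exact UV.isCompressed_self _ _⟩
  -- `hlt` and `hle` prove that the measure in `termination_by` decreases.
  have hlt := card_lt_card (filter_mem_ssubset_filter_mem_compression hv)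
  have hle := card_filter_le (𝓒 {u} {v} 𝒜) (u ∈ ·)
  have hcard := UV.card_compression {u} {v} 𝒜
  have hsized : ((𝓒 {u} {v} 𝒜 : Finset (Finset α)) : Set (Finset α)).Sized r :=
    h𝒜.uvCompression (by simp)
  obtain ⟨ℬ, hℬ, hsizedℬ, hcardℬ, hshadowℬ⟩ := exists_isShifted u hsized
  exact ⟨ℬ, hℬ, hsizedℬ, hcardℬ.trans hcard, hshadowℬ.trans hshadow⟩
termination_by #𝒜 - #{s ∈ 𝒜 | u ∈ s}

def LovaszShadowBound (k : ℕ) (𝒜 : Finset (Finset α)) : Prop :=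
  ∀ x : ℝ, (k : ℝ) + 1 ≤ x → rchoose x (k + 1) ≤ #𝒜 → rchoose x k ≤ #(∂ 𝒜)

lemma lovaszShadowBound_zero (h𝒜 : (𝒜 : Set (Finset α)).Sized 1) : LovaszShadowBound 0 𝒜 := by
  intro x hx hcard
  obtain ⟨s, hs⟩ := nonempty_of_rchoose_le_card (by simpa using hx) hcard
  obtain ⟨a, ha⟩ := card_pos.1 (by rw [h𝒜 hs]; exact one_pos)
  rw [rchoose_zero, Nat.one_le_cast]
  exact card_pos.2 ⟨_, erase_mem_shadow hs ha⟩

lemma IsShifted.lovaszShadowBound_succ {k : ℕ} (h𝒜 : IsShifted u 𝒜)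
    (hsized : (𝒜 : Set (Finset α)).Sized (k + 2))
    (ih : ∀ 𝒞 : Finset (Finset α), (𝒞 : Set (Finset α)).Sized (k + 1) → LovaszShadowBound k 𝒞)
    (ih_card : ∀ 𝒞 : Finset (Finset α), (𝒞 : Set (Finset α)).Sized (k + 2) → #𝒞 < #𝒜 →
      LovaszShadowBound (k + 1) 𝒞) :
    LovaszShadowBound (k + 1) 𝒜 := by
  intro x hx hcard
  push_cast at hx
  have hsplit := card_memberSubfamily_add_card_nonMemberSubfamily u 𝒜
  have hmember : rchoose (x - 1) (k + 1) ≤ #(𝒜.memberSubfamily u) := by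
    by_contra! hlt
    have hpascal := rchoose_succ_succ (x - 1) (k + 1)
    rw [sub_add_cancel] at hpascal
    have hnon : rchoose (x - 1) (k + 2) < #(𝒜.nonMemberSubfamily u) := by
      rw [← hsplit, Nat.cast_add] at hcard
      linarith
    have hnon_pos : (1 : ℝ) ≤ #(𝒜.nonMemberSubfamily u) := by
      have := (rchoose_nonneg (x := x - 1) (k := k + 2) (by push_cast; linarith)).trans_lt hnon
      exact_mod_cast this
    -- The induction hypothesis needs `k + 2 ≤ y`, the contradiction needs `x - 1 ≤ y`.
    set y := max (x - 1) (k + 2)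
    have hxy : x - 1 ≤ y := le_max_left _ _
    have hky : (k : ℝ) + 2 ≤ y := le_max_right _ _
    have hy : rchoose y (k + 2) ≤ #(𝒜.nonMemberSubfamily u) := by
      rcases max_choice (x - 1) (k + 2) with h | h <;> simp only [y, h]
      · exact hnon.le
      · exact_mod_cast (rchoose_self (k + 2)).le.trans hnon_pos
    have hlt_card : #(𝒜.nonMemberSubfamily u) < #𝒜 := by
      have := card_pos.2 (h𝒜.memberSubfamily_nonempty hsized
        (nonempty_of_rchoose_le_card (by push_cast; linarith) hcard))
      omega
    have hshadow := ih_card _ hsized.nonMemberSubfamily hlt_card y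
      (by push_cast; linarith) (by exact_mod_cast hy)
    have hsub : (#(∂ (𝒜.nonMemberSubfamily u)) : ℝ) ≤ #(𝒜.memberSubfamily u) := by
      exact_mod_cast card_le_card h𝒜.shadow_nonMemberSubfamily_subset
    have hmono : rchoose (x - 1) (k + 1) ≤ rchoose y (k + 1) :=
      rchoose_monotoneOn (k + 1) (by simp; linarith) (by simp; linarith) hxy
    linarith
  have hshadow := ih _ hsized.memberSubfamily (x - 1) (by linarith) hmember
  calc rchoose x (k + 1) = rchoose (x - 1) (k + 1) + rchoose (x - 1) k := by
        rw [← sub_add_cancel x 1, rchoose_succ_succ, add_sub_cancel_right, add_comm]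
    _ ≤ #(𝒜.memberSubfamily u) + #(∂ (𝒜.memberSubfamily u)) := add_le_add hmember hshadow
    _ ≤ #(∂ 𝒜) := by exact_mod_cast card_memberSubfamily_add_card_shadow_le

theorem lovaszShadowBound (k : ℕ) :
    ∀ 𝒜 : Finset (Finset α), (𝒜 : Set (Finset α)).Sized (k + 1) → LovaszShadowBound k 𝒜 := by
  induction k with
  | zero => exact fun 𝒜 => lovaszShadowBound_zero
  | succ k ih =>
    intro 𝒜 h𝒜
    induction h : #𝒜 using Nat.strong_induction_on generalizing 𝒜 with
    | _ n ih_card =>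
      intro x hx hcard
      obtain ⟨s, hs⟩ := nonempty_of_rchoose_le_card (by push_cast at hx ⊢; linarith) hcard
      obtain ⟨u, -⟩ := card_pos.1 (by rw [h𝒜 hs]; omega)
      obtain ⟨ℬ, hℬ, hsized, hcardℬ, hshadowℬ⟩ := exists_isShifted u h𝒜
      have hbound := hℬ.lovaszShadowBound_succ hsized ih fun 𝒞 h𝒞 hlt =>
        ih_card _ (by omega) 𝒞 h𝒞 rfl
      exact (hbound x hx (by rwa [hcardℬ])).trans (by exact_mod_cast hshadowℬ)

end Finset

theorem lovasz_kruskal_katona_general {X : Type*} [DecidableEq X]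
    (k : ℕ) (hk : 0 < k) (𝒜 : Finset (Finset X)) (h𝒜 : ∀ A ∈ 𝒜, A.card = k)
    (x : ℝ) (hx : (k : ℝ) ≤ x) (hcard : (𝒜.card : ℝ) = rchoose x k) :
    rchoose x (k - 1) ≤ ((Finset.shadow 𝒜).card : ℝ) := by
  obtain ⟨j, rfl⟩ := Nat.exists_eq_add_one.2 hk
  simpa using Finset.lovaszShadowBound j 𝒜 h𝒜 x (by exact_mod_cast hx) hcard.ge

theorem lovasz_kruskal_katona {X : Type*} [DecidableEq X] [Fintype X]
    (k : ℕ) (hk : 0 < k) (𝒜 : Finset (Finset X)) (h𝒜 : ∀ A ∈ 𝒜, A.card = k)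
    (x : ℝ) (hx : (k : ℝ) ≤ x) (hcard : (𝒜.card : ℝ) = rchoose x k) :
    rchoose x (k - 1) ≤ ((Finset.shadow 𝒜).card : ℝ) :=
  lovasz_kruskal_katona_general k hk 𝒜 h𝒜 x hx hcard
end

section
/- Let t₁, ..., t_n be nonnegative reals with ∑_{i=1}^n t_i ≤ α·n, and let q be a positive integer with q ≤ n/2. Then there exists an integer p with p ≥ n/2, p + q ≤ n, and n − p divisible by q, such that ∑_{i=p+1}^{p+q} t_i ≤ α·n/⌊n/(2q)⌋. -/
lemma window_sum_eq (n q : ℕ) (t : ℕ → ℝ) :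
    ∀ m : ℕ, m * q ≤ n →
      ∑ k ∈ Finset.Icc 1 m, (∑ i ∈ Finset.Ioc (n - k * q) (n - k * q + q), t i)
        = ∑ i ∈ Finset.Ioc (n - m * q) n, t i := by
  intro m
  induction m with
  | zero => simp
  | succ m ih =>
    intro hle
    have hmq : m * q ≤ n := by nlinarith [Nat.succ_mul m q]
    rw [Finset.sum_Icc_succ_top (by omega : 1 ≤ m + 1), ih hmq]
    have h1 : n - (m + 1) * q + q = n - m * q := by
      have : (m + 1) * q = m * q + q := by ring
      omega
    rw [h1]
    have h2 : n - (m + 1) * q ≤ n - m * q := by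
      have : (m + 1) * q = m * q + q := by ring
      omega
    rw [add_comm]
    exact Finset.sum_Ioc_consecutive t h2 (Nat.sub_le n (m * q))

theorem exists_cheap_window (n : ℕ) (hn : 0 < n) (α : ℝ) (hα : 1 ≤ α)
    (t : ℕ → ℝ) (ht : ∀ i, 0 ≤ t i)
    (hsum : ∑ i ∈ Finset.Icc 1 n, t i ≤ α * n)
    (q : ℕ) (hq : 0 < q) (hq2 : (q : ℝ) ≤ (n : ℝ) / 2) :
    ∃ p : ℕ, (n : ℝ) / 2 ≤ (p : ℝ) ∧ p + q ≤ n ∧ q ∣ (n - p) ∧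
      ∑ i ∈ Finset.Icc (p + 1) (p + q), t i ≤ α * n / ((n / (2 * q) : ℕ) : ℝ) := by
  set m : ℕ := n / (2 * q) with hm
  have h2qn : 2 * q ≤ n := by
    have : (2 * q : ℝ) ≤ n := by push_cast; linarith
    exact_mod_cast this
  have hm1 : 1 ≤ m := Nat.le_div_iff_mul_le (by omega) |>.mpr (by omega)
  have hmul : m * (2 * q) ≤ n := Nat.div_mul_le_self n (2 * q)
  have hmq : m * q ≤ n := by nlinarith
  -- total sum of windows
  have hkey : ∑ k ∈ Finset.Icc 1 m, (∑ i ∈ Finset.Ioc (n - k * q) (n - k * q + q), t i)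
      ≤ α * n := by
    rw [window_sum_eq n q t m hmq]
    refine le_trans (Finset.sum_le_sum_of_subset_of_nonneg ?_ (fun i _ _ => ht i)) hsum
    intro i hi
    simp only [Finset.mem_Ioc, Finset.mem_Icc] at hi ⊢
    omega
  -- pigeonhole
  have hmpos : (0 : ℝ) < m := by exact_mod_cast hm1
  have hex : ∃ k ∈ Finset.Icc 1 m,
      (∑ i ∈ Finset.Ioc (n - k * q) (n - k * q + q), t i) ≤ α * n / m := by
    by_contra hcon
    push_neg at hcon
    have : α * n < ∑ k ∈ Finset.Icc 1 m, (∑ i ∈ Finset.Ioc (n - k * q) (n - k * q + q), t i) := by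
      calc α * n = ∑ _k ∈ Finset.Icc 1 m, (α * n / m) := by
              rw [Finset.sum_const, Nat.card_Icc]
              simp only [Nat.add_sub_cancel, nsmul_eq_mul]
              field_simp
           _ < _ := by
              apply Finset.sum_lt_sum_of_nonempty
              · exact ⟨1, by simp [hm1]⟩
              · exact fun k hk => hcon k hk
    linarith
  obtain ⟨k, hk, hsk⟩ := hex
  simp only [Finset.mem_Icc] at hk
  refine ⟨n - k * q, ?_, ?_, ?_, ?_⟩
  · have hkq : 2 * (k * q) ≤ n := by nlinarith [hk.2]
    have hkqn : k * q ≤ n := by omega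
    have : ((n - k * q : ℕ) : ℝ) = (n : ℝ) - (k * q : ℕ) := by
      exact Nat.cast_sub hkqn
    rw [this]
    have : ((2 * (k * q) : ℕ) : ℝ) ≤ (n : ℝ) := by exact_mod_cast hkq
    push_cast at this ⊢
    linarith
  · have : q ≤ k * q := Nat.le_mul_of_pos_left q hk.1
    omega
  · have hkqn : k * q ≤ n := by nlinarith [hk.2]
    have : n - (n - k * q) = k * q := by omega
    rw [this]
    exact ⟨k, by ring⟩
  · have heq : Finset.Icc (n - k * q + 1) (n - k * q + q) = Finset.Ioc (n - k * q) (n - k * q + q) := by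
      ext i; simp [Finset.mem_Icc, Finset.mem_Ioc]
    rw [heq]
    exact hsk
end

section
/- For any distribution 𝒟 on S_n and any nonempty Y ⊆ [n] and x ∈ Y, the probability that π(x) = max π(Y) equals ∑_{T : Y ⊆ T ⊆ [n]} Pr[π([|T|]) = T] · Pr[π(|T|) = x | π([|T|]) = T], where the sum is over T with positive support. -/
open Finset

lemma card_filter_lt_fin {n m : ℕ} (hm : m ≤ n) :
    (univ.filter (fun i : Fin n => (i : ℕ) < m)).card = m := by
  have h : (univ.filter (fun i : Fin n => (i : ℕ) < m)) =
      (univ : Finset (Fin m)).map (Fin.castLEEmb hm) := by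
    ext i
    simp only [mem_filter, mem_univ, true_and, mem_map, Fin.castLEEmb, Fin.castLE,
      Function.Embedding.coeFn_mk]
    constructor
    · intro h; exact ⟨⟨i, h⟩, rfl⟩
    · rintro ⟨j, rfl⟩; exact j.isLt
  rw [h]; simp



open Finset in
theorem maxwise_by_transition_weights (n : ℕ)
    (D : Equiv.Perm (Fin n) → ℝ)
    (hD0 : ∀ π, 0 ≤ D π)
    (hD1 : ∑ π : Equiv.Perm (Fin n), D π = 1)
    (Y : Finset (Fin n)) (hY : Y.Nonempty) (x : Fin n) (hx : x ∈ Y) :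
    -- Pr[π(x) = max π(Y)]
    (∑ π ∈ univ.filter (fun π : Equiv.Perm (Fin n) => ∀ y ∈ Y, π.symm y ≤ π.symm x), D π)
      = ∑ T ∈ univ.filter (fun T : Finset (Fin n) => Y ⊆ T ∧
            0 < ∑ π ∈ univ.filter (fun π : Equiv.Perm (Fin n) =>
                  (univ.filter (fun i : Fin n => (i : ℕ) < T.card)).image π = T), D π),
          -- Pr[π([|T|]) = T] ⬝ Pr[π(|T|) = x ∣ π([|T|]) = T]
          (∑ π ∈ univ.filter (fun π : Equiv.Perm (Fin n) =>
              (univ.filter (fun i : Fin n => (i : ℕ) < T.card)).image π = T), D π) *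
          ((∑ π ∈ univ.filter (fun π : Equiv.Perm (Fin n) =>
              (univ.filter (fun i : Fin n => (i : ℕ) < T.card)).image π = T ∧
              π (⟨T.card - 1, by
                  have h1 : T.card ≤ n := by simpa using Finset.card_le_univ T
                  have h2 : 0 < n := x.pos
                  omega⟩ : Fin n) = x), D π) /
           (∑ π ∈ univ.filter (fun π : Equiv.Perm (Fin n) =>
              (univ.filter (fun i : Fin n => (i : ℕ) < T.card)).image π = T), D π)) := by
  classical
  have hn : 0 < n := x.pos
  have pf : ∀ T : Finset (Fin n), T.card - 1 < n := fun T => by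
    have h1 : T.card ≤ n := by simpa using Finset.card_le_univ T
    omega
  -- membership characterization
  have hmem : ∀ (π : Equiv.Perm (Fin n)) (T : Finset (Fin n)),
      (univ.filter (fun i : Fin n => (i : ℕ) < T.card)).image π = T →
      ∀ y, y ∈ T ↔ (π.symm y : ℕ) < T.card := by
    intro π T him y
    constructor
    · intro hy
      rw [← him] at hy
      obtain ⟨i, hi, rfl⟩ := mem_image.1 hy
      simpa using (mem_filter.1 hi).2
    · intro h
      rw [← him]
      exact mem_image.2 ⟨π.symm y, mem_filter.2 ⟨mem_univ _, h⟩, π.apply_symm_apply y⟩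
  set T0 : Equiv.Perm (Fin n) → Finset (Fin n) := fun π =>
    (univ.filter (fun i : Fin n => (i : ℕ) < (π.symm x : ℕ) + 1)).image π with hT0
  have hT0card : ∀ π, (T0 π).card = (π.symm x : ℕ) + 1 := by
    intro π
    rw [hT0]
    rw [Finset.card_image_of_injective _ π.injective,
      card_filter_lt_fin (by have := (π.symm x).isLt; omega)]
  have hT0cond : ∀ π : Equiv.Perm (Fin n),
      (univ.filter (fun i : Fin n => (i : ℕ) < (T0 π).card)).image π = T0 π := by
    intro π
    rw [hT0card]
  have hT0x : ∀ π : Equiv.Perm (Fin n), π ⟨(T0 π).card - 1, pf _⟩ = x := by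
    intro π
    have : (⟨(T0 π).card - 1, pf _⟩ : Fin n) = π.symm x := by
      apply Fin.ext
      show (T0 π).card - 1 = ((π.symm x : Fin n) : ℕ)
      rw [hT0card]
      omega
    rw [this, π.apply_symm_apply]
  have huniq : ∀ (π : Equiv.Perm (Fin n)) (T : Finset (Fin n)), x ∈ T →
      (univ.filter (fun i : Fin n => (i : ℕ) < T.card)).image π = T →
      π ⟨T.card - 1, pf T⟩ = x → T = T0 π := by
    intro π T hxT him hpx
    have hTpos : 0 < T.card := card_pos.2 ⟨x, hxT⟩
    have hsx : π.symm x = ⟨T.card - 1, pf T⟩ := by rw [← hpx]; simp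
    have hcard : T.card = (π.symm x : ℕ) + 1 := by rw [hsx]; simp; omega
    rw [← him, hT0, hcard]
  have hYsub : ∀ π : Equiv.Perm (Fin n),
      Y ⊆ T0 π ↔ ∀ y ∈ Y, π.symm y ≤ π.symm x := by
    intro π
    constructor
    · intro h y hy
      have := (hmem π (T0 π) (hT0cond π) y).1 (h hy)
      rw [hT0card] at this
      exact Fin.le_def.2 (by omega)
    · intro h y hy
      refine (hmem π (T0 π) (hT0cond π) y).2 ?_
      rw [hT0card]
      have := Fin.le_def.1 (h y hy); omega
  -- fiber description
  have hfib : ∀ π : Equiv.Perm (Fin n),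
      univ.filter (fun T : Finset (Fin n) => Y ⊆ T ∧
        ((univ.filter (fun i : Fin n => (i : ℕ) < T.card)).image π = T ∧
          π ⟨T.card - 1, pf T⟩ = x))
      = if (∀ y ∈ Y, π.symm y ≤ π.symm x) then {T0 π} else ∅ := by
    intro π
    split_ifs with hev
    · ext T
      simp only [mem_filter, mem_univ, true_and, mem_singleton]
      constructor
      · rintro ⟨hYT, him, hpx⟩
        exact huniq π T (hYT hx) him hpx
      · rintro rfl
        exact ⟨(hYsub π).2 hev, hT0cond π, hT0x π⟩
    · ext T
      simp only [mem_filter, mem_univ, true_and, notMem_empty, iff_false, not_and]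
      intro hYT him hpx
      have hT := huniq π T (hYT hx) him hpx
      exact absurd ((hYsub π).1 (hT ▸ hYT)) hev
  -- A and B nonneg, B ≤ A
  have hA0 : ∀ T : Finset (Fin n),
      (0:ℝ) ≤ ∑ π ∈ univ.filter (fun π : Equiv.Perm (Fin n) =>
        (univ.filter (fun i : Fin n => (i : ℕ) < T.card)).image π = T), D π :=
    fun T => Finset.sum_nonneg fun π _ => hD0 π
  have hBA : ∀ T : Finset (Fin n),
      (∑ π ∈ univ.filter (fun π : Equiv.Perm (Fin n) =>
        (univ.filter (fun i : Fin n => (i : ℕ) < T.card)).image π = T ∧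
        π ⟨T.card - 1, pf T⟩ = x), D π)
      ≤ ∑ π ∈ univ.filter (fun π : Equiv.Perm (Fin n) =>
        (univ.filter (fun i : Fin n => (i : ℕ) < T.card)).image π = T), D π := by
    intro T
    apply Finset.sum_le_sum_of_subset_of_nonneg
    · intro π hπ
      simp only [mem_filter, mem_univ, true_and] at hπ ⊢
      exact hπ.1
    · intro π _ _; exact hD0 π
  have hB0 : ∀ T : Finset (Fin n),
      (0:ℝ) ≤ ∑ π ∈ univ.filter (fun π : Equiv.Perm (Fin n) =>
        (univ.filter (fun i : Fin n => (i : ℕ) < T.card)).image π = T ∧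
        π ⟨T.card - 1, pf T⟩ = x), D π :=
    fun T => Finset.sum_nonneg fun π _ => hD0 π
  calc (∑ π ∈ univ.filter (fun π : Equiv.Perm (Fin n) => ∀ y ∈ Y, π.symm y ≤ π.symm x), D π)
      = ∑ π : Equiv.Perm (Fin n),
          if (∀ y ∈ Y, π.symm y ≤ π.symm x) then D π else 0 := by
        rw [Finset.sum_filter]
    _ = ∑ π : Equiv.Perm (Fin n),
          ∑ T ∈ univ.filter (fun T : Finset (Fin n) => Y ⊆ T ∧
            ((univ.filter (fun i : Fin n => (i : ℕ) < T.card)).image π = T ∧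
              π ⟨T.card - 1, pf T⟩ = x)), D π := by
        refine Finset.sum_congr rfl fun π _ => ?_
        rw [hfib π]
        split_ifs with hev <;> simp
    _ = ∑ T ∈ univ.filter (fun T : Finset (Fin n) => Y ⊆ T),
          ∑ π ∈ univ.filter (fun π : Equiv.Perm (Fin n) =>
            (univ.filter (fun i : Fin n => (i : ℕ) < T.card)).image π = T ∧
              π ⟨T.card - 1, pf T⟩ = x), D π := by
        simp only [Finset.sum_filter]
        rw [Finset.sum_comm]
        refine Finset.sum_congr rfl fun T _ => ?_
        by_cases hP : Y ⊆ T <;> simp [hP]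
    _ = ∑ T ∈ univ.filter (fun T : Finset (Fin n) => Y ⊆ T ∧
            0 < ∑ π ∈ univ.filter (fun π : Equiv.Perm (Fin n) =>
                  (univ.filter (fun i : Fin n => (i : ℕ) < T.card)).image π = T), D π),
          ∑ π ∈ univ.filter (fun π : Equiv.Perm (Fin n) =>
            (univ.filter (fun i : Fin n => (i : ℕ) < T.card)).image π = T ∧
              π ⟨T.card - 1, pf T⟩ = x), D π := by
        symm
        apply Finset.sum_subset
        · intro T hT
          simp only [mem_filter, mem_univ, true_and] at hT ⊢
          exact hT.1
        · intro T hT hT2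
          simp only [mem_filter, mem_univ, true_and, not_and, not_lt] at hT hT2
          have hAz := le_antisymm (hT2 hT) (hA0 T)
          have h1 := hBA T
          have h2 := hB0 T
          linarith
    _ = _ := by
        refine Finset.sum_congr rfl fun T hT => ?_
        simp only [mem_filter, mem_univ, true_and] at hT
        rw [mul_comm, div_mul_cancel₀]
        exact ne_of_gt hT.2
end
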